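/- Let p > 0, μ > 0, δ > 0, E > 0. Let F, G, G_δ ∈ L²(ℝ, ℂ) satisfy: F(ξ) = ξ²/(1 − e^{−ξ}) · G(ξ) for a.e. ξ ≠ 0; ‖G − G_δ‖_{L²} ≤ δ; and ∫_ℝ |F(ξ)|² (1 + ξ²)^p dξ ≤ E². Define F_{δ,μ}(ξ) = ξ²/((1 − e^{−ξ})(1 + μ²ξ²)) · G_δ(ξ). Then ‖F − F_{δ,μ}‖_{L²} ≤ (1/(2μ) + 1/μ²) δ + E max{μ², μ^p}. -/

import Mathlib

/-!
Since `F = m G` with `m(ξ) = ξ²/(1 - e^{-ξ})`, the error splits pointwise as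
`F - F_{δ,μ} = s F + (m / (1 + μ²ξ²)) (G - G_δ)` with `s(ξ) = μ²ξ²/(1 + μ²ξ²)`.
The noise multiplier is bounded by `1/(2μ) + 1/μ²` because `|1 - e^{-ξ}| ≥ |ξ|/(1 + |ξ|)`,
and the bias multiplier by `max(μ², μ^p) (1 + ξ²)^{p/2}` because `s ≤ min(1, μ²ξ²)`,
which the Sobolev-type bound on `F` turns into `E max(μ², μ^p)`.
-/

open MeasureTheory ENNReal Real

lemma abs_div_one_add_abs_le_abs_one_sub_exp_neg (x : ℝ) : |x| / (1 + |x|) ≤ |1 - exp (-x)| := by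
  rcases le_or_gt 0 x with hx | hx
  · have hexp : exp (-x) * (1 + x) ≤ 1 := by
      rw [exp_neg, inv_mul_le_iff₀ (exp_pos x)]
      linarith [add_one_le_exp x]
    have hpos : 0 ≤ 1 - exp (-x) := by
      simpa using exp_le_one_iff.2 (neg_nonpos.2 hx)
    rw [abs_of_nonneg hx, abs_of_nonneg hpos, div_le_iff₀ (by positivity)]
    nlinarith
  · calc |x| / (1 + |x|) ≤ |x| := div_le_self (abs_nonneg x) (by linarith [abs_nonneg x])
      _ = -x := abs_of_neg hx
      _ ≤ exp (-x) - 1 := by linarith [add_one_le_exp (-x)]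
      _ ≤ |1 - exp (-x)| := by rw [abs_sub_comm]; exact le_abs_self _

lemma mul_one_add_div_one_add_sq_mul_sq_le {μ : ℝ} (hμ : 0 < μ) (t : ℝ) :
    t * (1 + t) / (1 + μ ^ 2 * t ^ 2) ≤ 1 / (2 * μ) + 1 / μ ^ 2 := by
  have hd : 0 < 1 + μ ^ 2 * t ^ 2 := by positivity
  have h₁ : t / (1 + μ ^ 2 * t ^ 2) ≤ 1 / (2 * μ) := by
    rw [div_le_div_iff₀ hd (by positivity)]
    nlinarith [sq_nonneg (μ * t - 1)]
  have h₂ : t ^ 2 / (1 + μ ^ 2 * t ^ 2) ≤ 1 / μ ^ 2 := by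
    rw [div_le_div_iff₀ hd (by positivity)]
    nlinarith
  calc t * (1 + t) / (1 + μ ^ 2 * t ^ 2)
      = t / (1 + μ ^ 2 * t ^ 2) + t ^ 2 / (1 + μ ^ 2 * t ^ 2) := by ring
    _ ≤ 1 / (2 * μ) + 1 / μ ^ 2 := add_le_add h₁ h₂

lemma abs_sq_div_one_sub_exp_neg_mul_le {μ : ℝ} (hμ : 0 < μ) (ξ : ℝ) :
    |ξ ^ 2 / ((1 - exp (-ξ)) * (1 + μ ^ 2 * ξ ^ 2))| ≤ 1 / (2 * μ) + 1 / μ ^ 2 := by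
  rcases eq_or_ne ξ 0 with rfl | hξ
  · simp only [ne_eq, OfNat.ofNat_ne_zero, not_false_eq_true, zero_pow, zero_div, abs_zero]
    positivity
  have hd : 0 < 1 + μ ^ 2 * |ξ| ^ 2 := by positivity
  have hlow : 0 < |ξ| / (1 + |ξ|) := by positivity
  calc |ξ ^ 2 / ((1 - exp (-ξ)) * (1 + μ ^ 2 * ξ ^ 2))|
      = |ξ| ^ 2 / (|1 - exp (-ξ)| * (1 + μ ^ 2 * |ξ| ^ 2)) := by
        rw [sq_abs, abs_div, abs_mul, abs_of_pos (by positivity : 0 < 1 + μ ^ 2 * ξ ^ 2),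
          abs_of_nonneg (sq_nonneg ξ)]
    _ ≤ |ξ| ^ 2 / (|ξ| / (1 + |ξ|) * (1 + μ ^ 2 * |ξ| ^ 2)) := by
        gcongr
        exact abs_div_one_add_abs_le_abs_one_sub_exp_neg ξ
    _ = |ξ| * (1 + |ξ|) / (1 + μ ^ 2 * |ξ| ^ 2) := by
        field_simp
    _ ≤ 1 / (2 * μ) + 1 / μ ^ 2 := mul_one_add_div_one_add_sq_mul_sq_le hμ |ξ|

lemma min_one_le_rpow {x a : ℝ} (hx : 0 ≤ x) (ha₀ : 0 ≤ a) (ha₁ : a ≤ 1) : min 1 x ≤ x ^ a := by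
  rcases le_total x 1 with h | h
  · calc min 1 x ≤ x := min_le_right _ _
      _ = x ^ (1 : ℝ) := (rpow_one x).symm
      _ ≤ x ^ a := rpow_le_rpow_of_exponent_ge' hx h ha₀ ha₁
  · exact (min_le_left _ _).trans (one_le_rpow h ha₀)

lemma sq_rpow_div_two {x : ℝ} (hx : 0 ≤ x) (p : ℝ) : (x ^ 2) ^ (p / 2) = x ^ p := by
  rw [← Real.rpow_natCast, ← rpow_mul hx]
  ring_nf

lemma sq_mul_sq_div_one_add_le {p μ : ℝ} (hp : 0 < p) (hμ : 0 < μ) (ξ : ℝ) :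
    μ ^ 2 * ξ ^ 2 / (1 + μ ^ 2 * ξ ^ 2) ≤ max (μ ^ 2) (μ ^ p) * (1 + ξ ^ 2) ^ (p / 2) := by
  have hx : 0 ≤ μ ^ 2 * ξ ^ 2 := by positivity
  have hmin : μ ^ 2 * ξ ^ 2 / (1 + μ ^ 2 * ξ ^ 2) ≤ min 1 (μ ^ 2 * ξ ^ 2) :=
    le_min (div_le_one_of_le₀ (by linarith) (by positivity)) (div_le_self hx (by linarith))
  rcases le_total p 2 with hp2 | hp2
  · calc μ ^ 2 * ξ ^ 2 / (1 + μ ^ 2 * ξ ^ 2) ≤ min 1 (μ ^ 2 * ξ ^ 2) := hmin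
      _ ≤ (μ ^ 2 * ξ ^ 2) ^ (p / 2) := min_one_le_rpow hx (by positivity) (by linarith)
      _ = μ ^ p * (ξ ^ 2) ^ (p / 2) := by
        rw [mul_rpow (by positivity) (sq_nonneg ξ), sq_rpow_div_two hμ.le]
      _ ≤ max (μ ^ 2) (μ ^ p) * (1 + ξ ^ 2) ^ (p / 2) := by
        gcongr
        · exact le_max_right _ _
        · linarith
  · have hle : μ ^ 2 * ξ ^ 2 ≤ μ ^ 2 * (1 + ξ ^ 2) ^ (1 : ℝ) := by
      rw [Real.rpow_one]
      gcongr
      linarith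
    calc μ ^ 2 * ξ ^ 2 / (1 + μ ^ 2 * ξ ^ 2) ≤ μ ^ 2 * (1 + ξ ^ 2) ^ (1 : ℝ) :=
          hmin.trans ((min_le_right _ _).trans hle)
      _ ≤ max (μ ^ 2) (μ ^ p) * (1 + ξ ^ 2) ^ (p / 2) := by
        gcongr
        · exact le_max_left _ _
        · linarith [sq_nonneg ξ]
        · linarith

lemma sq_norm_bias_mul_le {p μ : ℝ} (hp : 0 < p) (hμ : 0 < μ) (ξ : ℝ) (z : ℂ) :
    ‖((μ ^ 2 * ξ ^ 2 / (1 + μ ^ 2 * ξ ^ 2) : ℝ) : ℂ) * z‖ ^ 2 ≤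
      max (μ ^ 2) (μ ^ p) ^ 2 * (‖z‖ ^ 2 * (1 + ξ ^ 2) ^ p) := by
  rw [norm_mul, Complex.norm_real, Real.norm_eq_abs, abs_of_nonneg (by positivity), mul_pow]
  calc (μ ^ 2 * ξ ^ 2 / (1 + μ ^ 2 * ξ ^ 2)) ^ 2 * ‖z‖ ^ 2
      ≤ (max (μ ^ 2) (μ ^ p) * (1 + ξ ^ 2) ^ (p / 2)) ^ 2 * ‖z‖ ^ 2 := by
        gcongr
        exact sq_mul_sq_div_one_add_le hp hμ ξ
    _ = max (μ ^ 2) (μ ^ p) ^ 2 * (‖z‖ ^ 2 * (1 + ξ ^ 2) ^ p) := by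
        rw [mul_pow, ← Real.rpow_natCast ((1 + ξ ^ 2) ^ (p / 2)), ← Real.rpow_mul (by positivity)]
        ring_nf

lemma eLpNorm_two_le_of_sq_norm_le {α E F : Type*} [MeasurableSpace α] {μ : Measure α}
    [NormedAddCommGroup E] [NormedAddCommGroup F] {f : α → E} {g : α → F} {w : α → ℝ}
    {M K : ℝ} (hM : 0 ≤ M) (hK : 0 ≤ K) (hgf : ∀ x, ‖g x‖ ^ 2 ≤ M ^ 2 * (‖f x‖ ^ 2 * w x))
    (hf : ∫⁻ x, ‖f x‖ₑ ^ 2 * ENNReal.ofReal (w x) ∂μ ≤ ENNReal.ofReal (K ^ 2)) :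
    eLpNorm g 2 μ ≤ ENNReal.ofReal (M * K) := by
  have hpt : ∀ x, ‖g x‖ₑ ^ 2 ≤ ENNReal.ofReal (M ^ 2) * (‖f x‖ₑ ^ 2 * ENNReal.ofReal (w x)) := by
    intro x
    rw [← ofReal_norm, ← ofReal_norm, ← ENNReal.ofReal_pow (norm_nonneg _),
      ← ENNReal.ofReal_pow (norm_nonneg _), ← ENNReal.ofReal_mul (by positivity),
      ← ENNReal.ofReal_mul (by positivity)]
    exact ENNReal.ofReal_le_ofReal (hgf x)
  have hsq : eLpNorm g 2 μ ^ 2 ≤ ENNReal.ofReal (M * K) ^ 2 := by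
    calc eLpNorm g 2 μ ^ 2 = ∫⁻ x, ‖g x‖ₑ ^ 2 ∂μ := by
          simpa using eLpNorm_nnreal_pow_eq_lintegral (f := g) (μ := μ) (p := 2) two_ne_zero
      _ ≤ ∫⁻ x, ENNReal.ofReal (M ^ 2) * (‖f x‖ₑ ^ 2 * ENNReal.ofReal (w x)) ∂μ :=
          lintegral_mono hpt
      _ = ENNReal.ofReal (M ^ 2) * ∫⁻ x, ‖f x‖ₑ ^ 2 * ENNReal.ofReal (w x) ∂μ :=
          lintegral_const_mul' _ _ ofReal_ne_top
      _ ≤ ENNReal.ofReal (M ^ 2) * ENNReal.ofReal (K ^ 2) := by gcongr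
      _ = ENNReal.ofReal (M * K) ^ 2 := by
          rw [← ENNReal.ofReal_mul (by positivity), ← ENNReal.ofReal_pow (by positivity), mul_pow]
  exact (ENNReal.pow_le_pow_left_iff two_ne_zero).1 hsq

lemma regularization_error_eq_bias_add_noise {μ ξ : ℝ} {F G Gδ : ℂ}
    (hFG : F = ((ξ ^ 2 / (1 - exp (-ξ)) : ℝ) : ℂ) * G) :
    F - ((ξ ^ 2 / ((1 - exp (-ξ)) * (1 + μ ^ 2 * ξ ^ 2)) : ℝ) : ℂ) * Gδ =
      ((μ ^ 2 * ξ ^ 2 / (1 + μ ^ 2 * ξ ^ 2) : ℝ) : ℂ) * F +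
        ((ξ ^ 2 / ((1 - exp (-ξ)) * (1 + μ ^ 2 * ξ ^ 2)) : ℝ) : ℂ) * (G - Gδ) := by
  have hd : (1 + (μ : ℂ) ^ 2 * (ξ : ℂ) ^ 2) ≠ 0 := by
    exact_mod_cast (by positivity : (1 + μ ^ 2 * ξ ^ 2) ≠ 0)
  subst hFG
  push_cast
  rw [← div_div]
  generalize (ξ : ℂ) ^ 2 / (1 - Complex.exp (-ξ)) = q
  field_simp
  ring

/-- Frequency-domain error decomposition for the modified regularization
method: if `F(ξ) = ξ²/(1 − e^{−ξ})·G(ξ)` a.e. on `ξ ≠ 0`, `‖G − G_δ‖_{L²} ≤ δ`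
and `∫ |F(ξ)|²(1 + ξ²)^p dξ ≤ E²`, then with
`F_{δ,μ}(ξ) = ξ²/((1 − e^{−ξ})(1 + μ²ξ²))·G_δ(ξ)` one has
`‖F − F_{δ,μ}‖_{L²} ≤ (1/(2μ) + 1/μ²)δ + E·max{μ², μ^p}`. -/
theorem stmt_1 (p μ δ E : ℝ) (hp : 0 < p) (hμ : 0 < μ) (hδ : 0 < δ) (hE : 0 < E)
    (F G Gδ : ℝ → ℂ)
    (hF : MemLp F 2 (volume : Measure ℝ))
    (hG : MemLp G 2 (volume : Measure ℝ))
    (hGδ : MemLp Gδ 2 (volume : Measure ℝ))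
    (hFG : ∀ᵐ ξ : ℝ, ξ ≠ 0 → F ξ = ((ξ ^ 2 / (1 - Real.exp (-ξ)) : ℝ) : ℂ) * G ξ)
    (hnoise : eLpNorm (G - Gδ) 2 (volume : Measure ℝ) ≤ ENNReal.ofReal δ)
    (hsob : ∫⁻ ξ : ℝ, (‖F ξ‖₊ : ℝ≥0∞) ^ 2 * ENNReal.ofReal ((1 + ξ ^ 2) ^ p) ≤
      ENNReal.ofReal (E ^ 2)) :
    eLpNorm (fun ξ : ℝ => F ξ -
        ((ξ ^ 2 / ((1 - Real.exp (-ξ)) * (1 + μ ^ 2 * ξ ^ 2)) : ℝ) : ℂ) * Gδ ξ) 2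
        (volume : Measure ℝ) ≤
      ENNReal.ofReal ((1 / (2 * μ) + 1 / μ ^ 2) * δ + E * max (μ ^ 2) (μ ^ p)) := by
  set m : ℝ → ℝ := fun ξ => ξ ^ 2 / ((1 - exp (-ξ)) * (1 + μ ^ 2 * ξ ^ 2))
  set s : ℝ → ℝ := fun ξ => μ ^ 2 * ξ ^ 2 / (1 + μ ^ 2 * ξ ^ 2)
  have hsplit : (fun ξ => F ξ - (m ξ : ℂ) * Gδ ξ) =ᵐ[volume]
      (fun ξ => (s ξ : ℂ) * F ξ) + fun ξ => (m ξ : ℂ) * (G ξ - Gδ ξ) := by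
    filter_upwards [hFG, Measure.ae_ne volume 0] with ξ hξ hξ0
    exact regularization_error_eq_bias_add_noise (hξ hξ0)
  have hbias : eLpNorm (fun ξ => (s ξ : ℂ) * F ξ) 2 volume ≤
      ENNReal.ofReal (max (μ ^ 2) (μ ^ p) * E) :=
    eLpNorm_two_le_of_sq_norm_le (by positivity) hE.le
      (fun ξ => sq_norm_bias_mul_le hp hμ ξ (F ξ)) hsob
  have hnoise' : eLpNorm (fun ξ => (m ξ : ℂ) * (G ξ - Gδ ξ)) 2 volume ≤
      ENNReal.ofReal (1 / (2 * μ) + 1 / μ ^ 2) * ENNReal.ofReal δ := by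
    refine (eLpNorm_le_mul_eLpNorm_of_ae_le_mul (ae_of_all _ fun ξ => ?_) 2).trans (by gcongr)
    rw [norm_mul, Complex.norm_real, Real.norm_eq_abs]
    exact mul_le_mul_of_nonneg_right (abs_sq_div_one_sub_exp_neg_mul_le hμ ξ) (norm_nonneg _)
  have hs_meas : AEStronglyMeasurable (fun ξ => (s ξ : ℂ) * F ξ) volume :=
    .mul (by fun_prop) hF.1
  have hm_meas : AEStronglyMeasurable (fun ξ => (m ξ : ℂ) * (G ξ - Gδ ξ)) volume :=
    .mul (by fun_prop) (hG.1.sub hGδ.1)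
  calc eLpNorm (fun ξ => F ξ - (m ξ : ℂ) * Gδ ξ) 2 volume
      = eLpNorm ((fun ξ => (s ξ : ℂ) * F ξ) + fun ξ => (m ξ : ℂ) * (G ξ - Gδ ξ)) 2 volume :=
        eLpNorm_congr_ae hsplit
    _ ≤ _ := eLpNorm_add_le hs_meas hm_meas one_le_two
    _ ≤ ENNReal.ofReal (max (μ ^ 2) (μ ^ p) * E) +
        ENNReal.ofReal (1 / (2 * μ) + 1 / μ ^ 2) * ENNReal.ofReal δ := add_le_add hbias hnoise'
    _ = _ := by
        rw [← ENNReal.ofReal_mul (by positivity),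
          ← ENNReal.ofReal_add (by positivity) (by positivity)]
        ring_nf
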